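/- arXiv:2301.12389 — 9 statements merged into one kernel-verified Lean document; each statement's English description precedes it below -/
import Mathlib

section
/- Under consistency and ignorability, the marginal probability of causation is bounded below by the difference of conditional outcome probabilities: P(Y₀ ≠ y and Y₁ = y) ≥ P(Y = y | Z = z) − P(Y = y | Z ≠ z). -/
open MeasureTheory ProbabilityTheory

/-- Under consistency and ignorability, the marginal probability of causation is bounded
below by the difference of conditional outcome probabilities:
`P(Y₀ ≠ y ∧ Y₁ = y) ≥ P(Y = y | Z = z) − P(Y = y | Z ≠ z)`. -/
theorem mpoc_lower_bound
    {Ω 𝒵 𝒴 : Type*} [MeasurableSpace Ω]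
    (μ : Measure Ω) [IsProbabilityMeasure μ]
    (Z : Ω → 𝒵) (z : 𝒵) (Y Y1 Y0 : Ω → 𝒴) (y : 𝒴)
    (hmZ : MeasurableSet {ω | Z ω = z})
    (hmY : ∀ y' : 𝒴, MeasurableSet {ω | Y ω = y'})
    (hmY1 : ∀ y' : 𝒴, MeasurableSet {ω | Y1 ω = y'})
    (hmY0 : ∀ y' : 𝒴, MeasurableSet {ω | Y0 ω = y'})
    (hpos : 0 < μ {ω | Z ω = z}) (hlt : μ {ω | Z ω = z} < 1)
    (hcons1 : ∀ ω, Z ω = z → Y ω = Y1 ω)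
    (hcons0 : ∀ ω, Z ω ≠ z → Y ω = Y0 ω)
    (hind1 : ∀ y' : 𝒴,
      μ ({ω | Y1 ω = y'} ∩ {ω | Z ω = z}) = μ {ω | Y1 ω = y'} * μ {ω | Z ω = z})
    (hind0 : ∀ y' : 𝒴,
      μ ({ω | Y0 ω = y'} ∩ {ω | Z ω = z}) = μ {ω | Y0 ω = y'} * μ {ω | Z ω = z}) :
    (μ[{ω | Y ω = y}|{ω | Z ω = z}]).toReal
      - (μ[{ω | Y ω = y}|{ω | Z ω ≠ z}]).toReal
      ≤ (μ {ω | Y0 ω ≠ y ∧ Y1 ω = y}).toReal := by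
  set A : Set Ω := {ω | Z ω = z} with hA
  have hZne : ({ω | Z ω ≠ z} : Set Ω) = Aᶜ := rfl
  have hμA_ne_top : μ A ≠ ⊤ := hlt.trans_le le_top |>.ne
  have hμA_ne0 : μ A ≠ 0 := hpos.ne'
  have hμAc : μ Aᶜ = 1 - μ A := by
    rw [prob_compl_eq_one_sub hmZ]
  have hμAc_ne0 : μ Aᶜ ≠ 0 := by
    rw [hμAc]
    exact (tsub_pos_of_lt hlt).ne'
  have hμAc_ne_top : μ Aᶜ ≠ ⊤ := (measure_lt_top μ _).ne
  -- cond on A equals μ {Y1 = y}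
  have hset1 : A ∩ {ω | Y ω = y} = A ∩ {ω | Y1 ω = y} := by
    ext ω
    simp only [Set.mem_inter_iff, Set.mem_setOf_eq, hA]
    constructor
    · rintro ⟨hz, hy⟩; exact ⟨hz, (hcons1 ω hz) ▸ hy⟩
    · rintro ⟨hz, hy⟩; exact ⟨hz, (hcons1 ω hz).symm ▸ hy⟩
  have hset0 : Aᶜ ∩ {ω | Y ω = y} = Aᶜ ∩ {ω | Y0 ω = y} := by
    ext ω
    simp only [Set.mem_inter_iff, Set.mem_compl_iff, Set.mem_setOf_eq, hA]
    constructor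
    · rintro ⟨hz, hy⟩; exact ⟨hz, (hcons0 ω hz) ▸ hy⟩
    · rintro ⟨hz, hy⟩; exact ⟨hz, (hcons0 ω hz).symm ▸ hy⟩
  have hcond1 : μ[{ω | Y ω = y}|A] = μ {ω | Y1 ω = y} := by
    rw [cond_apply hmZ, hset1, Set.inter_comm, hind1 y, mul_comm,
      mul_assoc, ENNReal.mul_inv_cancel hμA_ne0 hμA_ne_top, mul_one]
  -- independence with complement
  have hind0c : μ ({ω | Y0 ω = y} ∩ Aᶜ) = μ {ω | Y0 ω = y} * μ Aᶜ := by
    have hsplit : μ ({ω | Y0 ω = y} ∩ A) + μ ({ω | Y0 ω = y} ∩ Aᶜ)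
        = μ {ω | Y0 ω = y} := by
      rw [← Set.diff_eq]
      exact measure_inter_add_diff _ hmZ
    have h1 : μ {ω | Y0 ω = y} * μ Aᶜ = μ {ω | Y0 ω = y} - μ {ω | Y0 ω = y} * μ A := by
      rw [hμAc, ENNReal.mul_sub (fun _ _ => (measure_lt_top μ _).ne), mul_one]
    have h2 : μ ({ω | Y0 ω = y} ∩ Aᶜ)
        = μ {ω | Y0 ω = y} - μ ({ω | Y0 ω = y} ∩ A) :=
      ENNReal.eq_sub_of_add_eq (measure_lt_top μ _).ne (by rw [add_comm]; exact hsplit)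
    rw [h2, hind0 y, ← h1]
  have hcond0 : μ[{ω | Y ω = y}|{ω | Z ω ≠ z}] = μ {ω | Y0 ω = y} := by
    rw [hZne, cond_apply hmZ.compl, hset0, Set.inter_comm, hind0c, mul_comm,
      mul_assoc, ENNReal.mul_inv_cancel hμAc_ne0 hμAc_ne_top, mul_one]
  rw [hcond1, hcond0]
  -- Key inequality: μ {Y1 = y} ≤ μ {Y0 = y} + μ {Y0 ≠ y ∧ Y1 = y}
  have hsub : {ω | Y1 ω = y} ⊆ {ω | Y0 ω = y} ∪ {ω | Y0 ω ≠ y ∧ Y1 ω = y} := by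
    intro ω hω
    by_cases h : Y0 ω = y
    · exact Or.inl h
    · exact Or.inr ⟨h, hω⟩
  have hkey : μ {ω | Y1 ω = y} ≤ μ {ω | Y0 ω = y} + μ {ω | Y0 ω ≠ y ∧ Y1 ω = y} :=
    (measure_mono hsub).trans (measure_union_le _ _)
  have h1 : (μ {ω | Y1 ω = y}).toReal
      ≤ (μ {ω | Y0 ω = y}).toReal + (μ {ω | Y0 ω ≠ y ∧ Y1 ω = y}).toReal := by
    rw [← ENNReal.toReal_add (measure_lt_top μ _).ne (measure_lt_top μ _).ne]
    exact ENNReal.toReal_mono (ENNReal.add_ne_top.mpr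
      ⟨(measure_lt_top μ _).ne, (measure_lt_top μ _).ne⟩) hkey
  linarith
end

section
/- Under conditional consistency and ignorability with respect to the remaining covariates, the conditional probability of causation is bounded below by the difference of conditional outcome probabilities: P(Y₀ ≠ y and Y₁ = y) ≥ P(Y = y | Z = z, W = w) − P(Y = y | Z ≠ z, W = w). -/
open MeasureTheory ProbabilityTheory

/-- Under conditional consistency and ignorability with respect to the remaining
covariates, the conditional probability of causation is bounded below by the difference
of conditional outcome probabilities:
`P(Y₀ ≠ y ∧ Y₁ = y) ≥ P(Y = y | Z = z, W = w) − P(Y = y | Z ≠ z, W = w)`. -/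
theorem cpoc_lower_bound
    {Ω 𝒵 𝒲 𝒴 : Type*} [MeasurableSpace Ω]
    (μ : Measure Ω) [IsProbabilityMeasure μ]
    (Z : Ω → 𝒵) (z : 𝒵) (W : Ω → 𝒲) (w : 𝒲) (Y Y1 Y0 : Ω → 𝒴) (y : 𝒴)
    (hmE1 : MeasurableSet {ω | Z ω = z ∧ W ω = w})
    (hmE0 : MeasurableSet {ω | Z ω ≠ z ∧ W ω = w})
    (hmY : ∀ y' : 𝒴, MeasurableSet {ω | Y ω = y'})
    (hmY1 : ∀ y' : 𝒴, MeasurableSet {ω | Y1 ω = y'})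
    (hmY0 : ∀ y' : 𝒴, MeasurableSet {ω | Y0 ω = y'})
    (hpos1 : 0 < μ {ω | Z ω = z ∧ W ω = w})
    (hpos0 : 0 < μ {ω | Z ω ≠ z ∧ W ω = w})
    (hcons1 : ∀ ω, Z ω = z ∧ W ω = w → Y ω = Y1 ω)
    (hcons0 : ∀ ω, Z ω ≠ z ∧ W ω = w → Y ω = Y0 ω)
    (hind1 : ∀ y' : 𝒴,
      μ ({ω | Y1 ω = y'} ∩ {ω | Z ω = z ∧ W ω = w})
        = μ {ω | Y1 ω = y'} * μ {ω | Z ω = z ∧ W ω = w})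
    (hind0 : ∀ y' : 𝒴,
      μ ({ω | Y0 ω = y'} ∩ {ω | Z ω ≠ z ∧ W ω = w})
        = μ {ω | Y0 ω = y'} * μ {ω | Z ω ≠ z ∧ W ω = w}) :
    (μ[{ω | Y ω = y}|{ω | Z ω = z ∧ W ω = w}]).toReal
      - (μ[{ω | Y ω = y}|{ω | Z ω ≠ z ∧ W ω = w}]).toReal
      ≤ (μ {ω | Y0 ω ≠ y ∧ Y1 ω = y}).toReal := by
  set E1 := {ω | Z ω = z ∧ W ω = w}
  set E0 := {ω | Z ω ≠ z ∧ W ω = w}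
  have hE1ne : μ E1 ≠ 0 := hpos1.ne'
  have hE0ne : μ E0 ≠ 0 := hpos0.ne'
  have hE1fin : μ E1 ≠ ⊤ := (measure_lt_top μ E1).ne
  have hE0fin : μ E0 ≠ ⊤ := (measure_lt_top μ E0).ne
  have hset1 : E1 ∩ {ω | Y ω = y} = {ω | Y1 ω = y} ∩ E1 := by
    ext ω
    simp only [Set.mem_inter_iff, Set.mem_setOf_eq, E1]
    constructor
    · rintro ⟨h, hy⟩; exact ⟨(hcons1 ω h) ▸ hy, h⟩
    · rintro ⟨hy, h⟩; exact ⟨h, (hcons1 ω h) ▸ hy⟩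
  have hset0 : E0 ∩ {ω | Y ω = y} = {ω | Y0 ω = y} ∩ E0 := by
    ext ω
    simp only [Set.mem_inter_iff, Set.mem_setOf_eq, E0]
    constructor
    · rintro ⟨h, hy⟩; exact ⟨(hcons0 ω h) ▸ hy, h⟩
    · rintro ⟨hy, h⟩; exact ⟨h, (hcons0 ω h) ▸ hy⟩
  have hc1 : μ[{ω | Y ω = y}|E1] = μ {ω | Y1 ω = y} := by
    rw [cond_apply hmE1, hset1, hind1 y, mul_comm, mul_assoc,
      ENNReal.mul_inv_cancel hE1ne hE1fin, mul_one]
  have hc0 : μ[{ω | Y ω = y}|E0] = μ {ω | Y0 ω = y} := by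
    rw [cond_apply hmE0, hset0, hind0 y, mul_comm, mul_assoc,
      ENNReal.mul_inv_cancel hE0ne hE0fin, mul_one]
  rw [hc1, hc0]
  have hsub : {ω | Y1 ω = y} ⊆ {ω | Y0 ω = y} ∪ {ω | Y0 ω ≠ y ∧ Y1 ω = y} := by
    intro ω h
    by_cases h0 : Y0 ω = y
    · exact Or.inl h0
    · exact Or.inr ⟨h0, h⟩
  have hle : μ {ω | Y1 ω = y} ≤ μ {ω | Y0 ω = y} + μ {ω | Y0 ω ≠ y ∧ Y1 ω = y} :=
    (measure_mono hsub).trans (measure_union_le _ _)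
  have h1 : (μ {ω | Y1 ω = y}).toReal
      ≤ (μ {ω | Y0 ω = y}).toReal + (μ {ω | Y0 ω ≠ y ∧ Y1 ω = y}).toReal := by
    rw [← ENNReal.toReal_add (measure_lt_top μ _).ne (measure_lt_top μ _).ne]
    exact ENNReal.toReal_mono (ENNReal.add_ne_top.mpr
      ⟨(measure_lt_top μ _).ne, (measure_lt_top μ _).ne⟩) hle
  linarith
end

section
/- Under consistency, ignorability, and the monotonicity condition P(Y₀ = y and Y₁ ≠ y) = 0, the marginal probability of causation is identified: P(Y₀ ≠ y and Y₁ = y) = P(Y = y | Z = z) − P(Y = y | Z ≠ z). -/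
open MeasureTheory ProbabilityTheory

/-- Under consistency, ignorability, and the monotonicity condition
`P(Y₀ = y ∧ Y₁ ≠ y) = 0`, the marginal probability of causation is identified:
`P(Y₀ ≠ y ∧ Y₁ = y) = P(Y = y | Z = z) − P(Y = y | Z ≠ z)`. -/
theorem mpoc_identified
    {Ω 𝒵 𝒴 : Type*} [MeasurableSpace Ω]
    (μ : Measure Ω) [IsProbabilityMeasure μ]
    (Z : Ω → 𝒵) (z : 𝒵) (Y Y1 Y0 : Ω → 𝒴) (y : 𝒴)
    (hmZ : MeasurableSet {ω | Z ω = z})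
    (hmY : ∀ y' : 𝒴, MeasurableSet {ω | Y ω = y'})
    (hmY1 : ∀ y' : 𝒴, MeasurableSet {ω | Y1 ω = y'})
    (hmY0 : ∀ y' : 𝒴, MeasurableSet {ω | Y0 ω = y'})
    (hpos : 0 < μ {ω | Z ω = z}) (hlt : μ {ω | Z ω = z} < 1)
    (hcons1 : ∀ ω, Z ω = z → Y ω = Y1 ω)
    (hcons0 : ∀ ω, Z ω ≠ z → Y ω = Y0 ω)
    (hind1 : ∀ y' : 𝒴,
      μ ({ω | Y1 ω = y'} ∩ {ω | Z ω = z}) = μ {ω | Y1 ω = y'} * μ {ω | Z ω = z})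
    (hind0 : ∀ y' : 𝒴,
      μ ({ω | Y0 ω = y'} ∩ {ω | Z ω = z}) = μ {ω | Y0 ω = y'} * μ {ω | Z ω = z})
    (hmono : μ {ω | Y0 ω = y ∧ Y1 ω ≠ y} = 0) :
    (μ {ω | Y0 ω ≠ y ∧ Y1 ω = y}).toReal
      = (μ[{ω | Y ω = y}|{ω | Z ω = z}]).toReal
        - (μ[{ω | Y ω = y}|{ω | Z ω ≠ z}]).toReal := by
  set p := μ {ω | Z ω = z} with hpdef
  have hp0 : p ≠ 0 := hpos.ne'
  have hptop : p ≠ ⊤ := (hlt.trans ENNReal.one_lt_top).ne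
  have hple : p ≤ 1 := hlt.le
  set a := μ {ω | Y1 ω = y} with hadef
  set b := μ {ω | Y0 ω = y} with hbdef
  set c := μ {ω | Y0 ω ≠ y ∧ Y1 ω = y} with hcdef
  have hafin : a ≠ ⊤ := (measure_lt_top μ _).ne
  have hbfin : b ≠ ⊤ := (measure_lt_top μ _).ne
  have hcfin : c ≠ ⊤ := (measure_lt_top μ _).ne
  -- conditional on Z = z equals a
  have hset1 : {ω | Z ω = z} ∩ {ω | Y ω = y} = {ω | Y1 ω = y} ∩ {ω | Z ω = z} := by
    ext ω
    simp only [Set.mem_inter_iff, Set.mem_setOf_eq]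
    constructor
    · rintro ⟨hz, hy⟩; exact ⟨(hcons1 ω hz).symm.trans hy, hz⟩
    · rintro ⟨hy, hz⟩; exact ⟨hz, (hcons1 ω hz).trans hy⟩
  have hcond1 : μ[{ω | Y ω = y}|{ω | Z ω = z}] = a := by
    rw [cond_apply hmZ, hset1, hind1 y, mul_comm, mul_assoc,
      ENNReal.mul_inv_cancel hp0 hptop, mul_one]
  -- complement set
  have hcomplset : {ω | Z ω ≠ z} = {ω | Z ω = z}ᶜ := rfl
  have hq : μ {ω | Z ω ≠ z} = 1 - p := by
    rw [hcomplset, measure_compl hmZ (measure_ne_top μ _), measure_univ, hpdef]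
  have hq0 : (1 : ENNReal) - p ≠ 0 := by
    exact fun h => absurd (tsub_eq_zero_iff_le.mp h) (not_le.mpr hlt)
  have hqtop : (1 : ENNReal) - p ≠ ⊤ := by
    exact (tsub_le_self.trans_lt ENNReal.one_lt_top).ne
  have hset0 : {ω | Z ω = z}ᶜ ∩ {ω | Y ω = y} = {ω | Y0 ω = y} \ {ω | Z ω = z} := by
    ext ω
    simp only [Set.mem_inter_iff, Set.mem_diff, Set.mem_compl_iff, Set.mem_setOf_eq]
    constructor
    · rintro ⟨hz, hy⟩; exact ⟨(hcons0 ω hz).symm.trans hy, hz⟩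
    · rintro ⟨hy, hz⟩; exact ⟨hz, (hcons0 ω hz).trans hy⟩
  have hdiff : μ ({ω | Y0 ω = y} \ {ω | Z ω = z}) = b * (1 - p) := by
    have h1 : μ ({ω | Y0 ω = y} ∩ {ω | Z ω = z}) + μ ({ω | Y0 ω = y} \ {ω | Z ω = z}) = b :=
      measure_inter_add_diff _ hmZ
    rw [hind0 y] at h1
    have h2 : b * p + b * (1 - p) = b := by
      rw [← mul_add, add_tsub_cancel_of_le hple, mul_one]
    have hfin : b * p ≠ ⊤ := ENNReal.mul_ne_top hbfin hptop
    exact (ENNReal.add_right_inj hfin).mp (h1.trans h2.symm)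
  have hcond0 : μ[{ω | Y ω = y}|{ω | Z ω ≠ z}] = b := by
    rw [hcomplset, cond_apply hmZ.compl, hset0, hdiff]
    rw [show μ {ω | Z ω = z}ᶜ = 1 - p from hq, mul_comm b _, ← mul_assoc,
      ENNReal.inv_mul_cancel hq0 hqtop, one_mul]
  -- decomposition: a = d + c, b = d
  set d := μ ({ω | Y1 ω = y} ∩ {ω | Y0 ω = y}) with hddef
  have hA : d + c = a := by
    have := measure_inter_add_diff {ω | Y1 ω = y} (hmY0 y) (μ := μ)
    rw [show {ω | Y1 ω = y} \ {ω | Y0 ω = y} = {ω | Y0 ω ≠ y ∧ Y1 ω = y} by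
      ext ω; simp only [Set.mem_diff, Set.mem_setOf_eq]; (try tauto)] at this
    exact this
  have hB : b = d := by
    have := measure_inter_add_diff {ω | Y0 ω = y} (hmY1 y) (μ := μ)
    rw [show {ω | Y0 ω = y} \ {ω | Y1 ω = y} = {ω | Y0 ω = y ∧ Y1 ω ≠ y} by
      ext ω; simp only [Set.mem_diff, Set.mem_setOf_eq]; (try tauto), hmono, add_zero] at this
    rw [hbdef, hddef, Set.inter_comm]
    exact this.symm
  have hbc : b + c = a := by rw [hB]; exact hA
  rw [hcond1, hcond0]
  have := ENNReal.toReal_add hbfin hcfin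
  rw [hbc] at this
  linarith [this]
end

section
/- Under conditional consistency, conditional ignorability, and the monotonicity condition P(Y₀ = y and Y₁ ≠ y) = 0, the conditional probability of causation is identified: P(Y₀ ≠ y and Y₁ = y) = P(Y = y | Z = z, W = w) − P(Y = y | Z ≠ z, W = w). -/
open MeasureTheory ProbabilityTheory

/-- Under conditional consistency, conditional ignorability, and the monotonicity
condition `P(Y₀ = y ∧ Y₁ ≠ y) = 0`, the conditional probability of causation is
identified: `P(Y₀ ≠ y ∧ Y₁ = y) = P(Y = y | Z = z, W = w) − P(Y = y | Z ≠ z, W = w)`. -/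
theorem cpoc_identified
    {Ω 𝒵 𝒲 𝒴 : Type*} [MeasurableSpace Ω]
    (μ : Measure Ω) [IsProbabilityMeasure μ]
    (Z : Ω → 𝒵) (z : 𝒵) (W : Ω → 𝒲) (w : 𝒲) (Y Y1 Y0 : Ω → 𝒴) (y : 𝒴)
    (hmE1 : MeasurableSet {ω | Z ω = z ∧ W ω = w})
    (hmE0 : MeasurableSet {ω | Z ω ≠ z ∧ W ω = w})
    (hmY : ∀ y' : 𝒴, MeasurableSet {ω | Y ω = y'})
    (hmY1 : ∀ y' : 𝒴, MeasurableSet {ω | Y1 ω = y'})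
    (hmY0 : ∀ y' : 𝒴, MeasurableSet {ω | Y0 ω = y'})
    (hpos1 : 0 < μ {ω | Z ω = z ∧ W ω = w})
    (hpos0 : 0 < μ {ω | Z ω ≠ z ∧ W ω = w})
    (hcons1 : ∀ ω, Z ω = z ∧ W ω = w → Y ω = Y1 ω)
    (hcons0 : ∀ ω, Z ω ≠ z ∧ W ω = w → Y ω = Y0 ω)
    (hind1 : ∀ y' : 𝒴,
      μ ({ω | Y1 ω = y'} ∩ {ω | Z ω = z ∧ W ω = w})
        = μ {ω | Y1 ω = y'} * μ {ω | Z ω = z ∧ W ω = w})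
    (hind0 : ∀ y' : 𝒴,
      μ ({ω | Y0 ω = y'} ∩ {ω | Z ω ≠ z ∧ W ω = w})
        = μ {ω | Y0 ω = y'} * μ {ω | Z ω ≠ z ∧ W ω = w})
    (hmono : μ {ω | Y0 ω = y ∧ Y1 ω ≠ y} = 0) :
    (μ {ω | Y0 ω ≠ y ∧ Y1 ω = y}).toReal
      = (μ[{ω | Y ω = y}|{ω | Z ω = z ∧ W ω = w}]).toReal
        - (μ[{ω | Y ω = y}|{ω | Z ω ≠ z ∧ W ω = w}]).toReal := by
  set E1 := {ω | Z ω = z ∧ W ω = w} with hE1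
  set E0 := {ω | Z ω ≠ z ∧ W ω = w} with hE0
  have hne1 : μ E1 ≠ 0 := hpos1.ne'
  have hne0 : μ E0 ≠ 0 := hpos0.ne'
  have hfin1 : μ E1 ≠ ⊤ := measure_ne_top μ E1
  have hfin0 : μ E0 ≠ ⊤ := measure_ne_top μ E0
  -- identify the conditional probabilities
  have hset1 : E1 ∩ {ω | Y ω = y} = {ω | Y1 ω = y} ∩ E1 := by
    ext ω; constructor
    · rintro ⟨hE, hY⟩; exact ⟨(hcons1 ω hE).symm.trans hY, hE⟩
    · rintro ⟨hY, hE⟩; exact ⟨hE, (hcons1 ω hE).trans hY⟩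
  have hset0 : E0 ∩ {ω | Y ω = y} = {ω | Y0 ω = y} ∩ E0 := by
    ext ω; constructor
    · rintro ⟨hE, hY⟩; exact ⟨(hcons0 ω hE).symm.trans hY, hE⟩
    · rintro ⟨hY, hE⟩; exact ⟨hE, (hcons0 ω hE).trans hY⟩
  have hc1 : μ[{ω | Y ω = y}|E1] = μ {ω | Y1 ω = y} := by
    rw [cond_apply hmE1, hset1, hind1 y, mul_comm (μ E1)⁻¹, mul_assoc,
      ENNReal.mul_inv_cancel hne1 hfin1, mul_one]
  have hc0 : μ[{ω | Y ω = y}|E0] = μ {ω | Y0 ω = y} := by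
    rw [cond_apply hmE0, hset0, hind0 y, mul_comm (μ E0)⁻¹, mul_assoc,
      ENNReal.mul_inv_cancel hne0 hfin0, mul_one]
  -- decompose
  have hdecY1 : μ {ω | Y1 ω = y} = μ {ω | Y0 ω ≠ y ∧ Y1 ω = y} + μ {ω | Y0 ω = y ∧ Y1 ω = y} := by
    have : {ω | Y1 ω = y} = ({ω | Y0 ω ≠ y ∧ Y1 ω = y} ∪ {ω | Y0 ω = y ∧ Y1 ω = y}) := by
      ext ω; by_cases h : Y0 ω = y <;> simp [h]
    rw [this, measure_union]
    · rintro s hs1 hs2 ω hω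
      exact absurd ((hs2 hω).1) ((hs1 hω).1)
    · exact (hmY0 y).inter (hmY1 y)
  have hdecY0 : μ {ω | Y0 ω = y} = μ {ω | Y0 ω = y ∧ Y1 ω = y} := by
    have h : {ω | Y0 ω = y} = ({ω | Y0 ω = y ∧ Y1 ω = y} ∪ {ω | Y0 ω = y ∧ Y1 ω ≠ y}) := by
      ext ω; by_cases h : Y1 ω = y <;> simp [h]
    refine le_antisymm ?_ (measure_mono fun ω hω => hω.1)
    calc μ {ω | Y0 ω = y}
        ≤ μ {ω | Y0 ω = y ∧ Y1 ω = y} + μ {ω | Y0 ω = y ∧ Y1 ω ≠ y} := by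
          rw [h]; exact measure_union_le _ _
      _ = μ {ω | Y0 ω = y ∧ Y1 ω = y} := by rw [hmono, add_zero]
  rw [hc1, hc0, hdecY1, hdecY0, ENNReal.toReal_add (measure_ne_top μ _) (measure_ne_top μ _)]
  ring
end

section
/- If Y₀ and Y₁ take values in a finite set L of nonnegative reals, then the probability-of-causation weighted sum dominates the difference of means: Σ_{y ∈ L} y · P(Y₀ ≠ y and Y₁ = y) ≥ E[Y₁] − E[Y₀]. -/
/-!
Both means are sums over the levels `y ∈ L` of `y · P(Y = y)`, and at each level
`P(Y₁ = y) - P(Y₀ = y) ≤ P(Y₁ = y, Y₀ ≠ y)`; since `y ≥ 0` these levelwise bounds add up.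
-/

open MeasureTheory

lemma Finset.sum_indicator_preimage_singleton {α M : Type*} [AddCommMonoid M] {f : α → M}
    {s : Finset M} (hfs : ∀ a, f a ∈ s) (a : α) :
    ∑ y ∈ s, (f ⁻¹' {y}).indicator (fun _ ↦ y) a = f a := by
  rw [Finset.sum_eq_single_of_mem (f a) (hfs a)]
  · simp
  · intro y _ hy
    exact Set.indicator_of_notMem (s := f ⁻¹' {y}) (Ne.symm hy) _

lemma integral_eq_sum_measureReal_preimage_smul {α E : Type*} [MeasurableSpace α]
    {μ : Measure α} [IsFiniteMeasure μ] [NormedAddCommGroup E] [NormedSpace ℝ E] [CompleteSpace E]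
    [MeasurableSpace E] [MeasurableSingletonClass E] {f : α → E}
    (hf : Measurable f) {s : Finset E} (hfs : ∀ a, f a ∈ s) :
    ∫ a, f a ∂μ = ∑ y ∈ s, μ.real (f ⁻¹' {y}) • y := by
  have hfiber (y : E) : MeasurableSet (f ⁻¹' {y}) := hf (measurableSet_singleton y)
  calc ∫ a, f a ∂μ = ∫ a, ∑ y ∈ s, (f ⁻¹' {y}).indicator (fun _ ↦ y) a ∂μ := by
        simp_rw [Finset.sum_indicator_preimage_singleton hfs]
    _ = ∑ y ∈ s, ∫ a, (f ⁻¹' {y}).indicator (fun _ ↦ y) a ∂μ :=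
        integral_finsetSum s fun y _ ↦ (integrable_const y).indicator (hfiber y)
    _ = ∑ y ∈ s, μ.real (f ⁻¹' {y}) • y :=
        Finset.sum_congr rfl fun y _ ↦ integral_indicator_const y (hfiber y)

/-- If `Y₀` and `Y₁` take values in a finite set `L` of nonnegative reals, then the
probability-of-causation weighted sum dominates the difference of means:
`Σ_{y ∈ L} y · P(Y₀ ≠ y ∧ Y₁ = y) ≥ E[Y₁] − E[Y₀]`. -/
theorem poc_weighted_sum_ge_mean_difference
    {Ω : Type*} [MeasurableSpace Ω]
    (μ : Measure Ω) [IsProbabilityMeasure μ]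
    (L : Finset ℝ) (hL : ∀ x ∈ L, 0 ≤ x)
    (Y1 Y0 : Ω → ℝ) (hY1m : Measurable Y1) (hY0m : Measurable Y0)
    (hY1L : ∀ ω, Y1 ω ∈ L) (hY0L : ∀ ω, Y0 ω ∈ L) :
    (∫ ω, Y1 ω ∂μ) - (∫ ω, Y0 ω ∂μ)
      ≤ ∑ y ∈ L, y * (μ {ω | Y0 ω ≠ y ∧ Y1 ω = y}).toReal := by
  rw [integral_eq_sum_measureReal_preimage_smul hY1m hY1L,
    integral_eq_sum_measureReal_preimage_smul hY0m hY0L, ← Finset.sum_sub_distrib]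
  refine Finset.sum_le_sum fun y hy ↦ ?_
  have hset : {ω | Y0 ω ≠ y ∧ Y1 ω = y} = Y1 ⁻¹' {y} \ Y0 ⁻¹' {y} := Set.ext fun _ ↦ and_comm
  rw [smul_eq_mul, smul_eq_mul, ← sub_mul, mul_comm, hset]
  exact mul_le_mul_of_nonneg_left le_measureReal_sdiff (hL y hy)
end

section
/- Under consistency and ignorability, with a nonnegative discrete outcome, the weighted sum of marginal probabilities of causation dominates the difference of conditional means: Σ_{y ∈ L} y · P(Y₀ ≠ y and Y₁ = y) ≥ E[Y | Z = z] − E[Y | Z ≠ z]. -/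
open MeasureTheory ProbabilityTheory

/-!
By consistency and ignorability, the law of `Y` given `Z = z` is the law of `Y₁`, and the law
of `Y` given `Z ≠ z` is the law of `Y₀` (independence of an event from `{Z = z}` passes to the
complement). So the difference of conditional means is `∑ y, y (P(Y₁ = y) - P(Y₀ = y))`, and
`P(Y₁ = y) - P(Y₀ = y) ≤ P(Y₁ = y, Y₀ ≠ y)` while the weights `y` are nonnegative.
-/

section

variable {Ω : Type*} [MeasurableSpace Ω] {μ : Measure Ω}

theorem integral_eq_sum_mul_measureReal_of_mem_finset [IsFiniteMeasure μ] {L : Finset ℝ}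
    {Y : Ω → ℝ} (hYm : Measurable Y) (hYL : ∀ ω, Y ω ∈ L) :
    ∫ ω, Y ω ∂μ = ∑ y ∈ L, y * μ.real {ω | Y ω = y} := by
  have hY (ω : Ω) : ∑ y ∈ L, {ω | Y ω = y}.indicator (fun _ ↦ y) ω = Y ω := by
    rw [Finset.sum_eq_single_of_mem (Y ω) (hYL ω) fun y _ hy ↦
      Set.indicator_of_notMem (s := {ω | Y ω = y}) (Ne.symm hy) _]
    simp
  have hlevel (y : ℝ) : MeasurableSet {ω | Y ω = y} := hYm (measurableSet_singleton y)
  calc ∫ ω, Y ω ∂μ = ∫ ω, ∑ y ∈ L, {ω | Y ω = y}.indicator (fun _ ↦ y) ω ∂μ := by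
        simp only [hY]
    _ = ∑ y ∈ L, ∫ ω, {ω | Y ω = y}.indicator (fun _ ↦ y) ω ∂μ :=
        integral_finsetSum _ fun y _ ↦ (integrable_const y).indicator (hlevel y)
    _ = ∑ y ∈ L, y * μ.real {ω | Y ω = y} := by
        simp only [integral_indicator_const _ (hlevel _), smul_eq_mul, mul_comm]

theorem measure_inter_compl_eq_mul [IsProbabilityMeasure μ] {s t : Set Ω} (hs : MeasurableSet s)
    (h : μ (t ∩ s) = μ t * μ s) : μ (t ∩ sᶜ) = μ t * μ sᶜ := by
  have hsplit : μ (t ∩ s) + μ (t ∩ sᶜ) = μ (t ∩ s) + μ t * μ sᶜ := by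
    rw [← Set.sdiff_eq, measure_inter_add_sdiff _ hs, h, ← mul_add, prob_add_prob_compl hs,
      mul_one]
  exact (ENNReal.add_right_inj (measure_ne_top μ _)).mp hsplit

theorem cond_setOf_eq_of_eqOn {α : Type*} [IsFiniteMeasure μ] {s : Set Ω} {f g : Ω → α} {a : α}
    (hs : MeasurableSet s) (hμs : μ s ≠ 0) (hfg : Set.EqOn f g s)
    (hindep : μ ({ω | g ω = a} ∩ s) = μ {ω | g ω = a} * μ s) :
    μ[|s] {ω | f ω = a} = μ {ω | g ω = a} := by
  have hinter : s ∩ {ω | f ω = a} = {ω | g ω = a} ∩ s :=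
    Set.ext fun ω ↦ ⟨fun ⟨hω, hf⟩ ↦ ⟨(hfg hω).symm.trans hf, hω⟩,
      fun ⟨hg, hω⟩ ↦ ⟨hω, (hfg hω).trans hg⟩⟩
  rw [cond_apply hs, hinter, hindep, mul_comm, mul_assoc,
    ENNReal.mul_inv_cancel hμs (measure_ne_top μ s), mul_one]

end

theorem mpoc_weighted_sum_ge_conditional_mean_difference_general
    {Ω 𝒵 : Type*} [MeasurableSpace Ω]
    (μ : Measure Ω) [IsProbabilityMeasure μ]
    (L : Finset ℝ) (hL : ∀ x ∈ L, 0 ≤ x)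
    (Z : Ω → 𝒵) (z : 𝒵)
    (Y Y1 Y0 : Ω → ℝ)
    (hYm : Measurable Y)
    (hYL : ∀ ω, Y ω ∈ L)
    (hmZ : MeasurableSet {ω | Z ω = z})
    (hpos : 0 < μ {ω | Z ω = z}) (hlt : μ {ω | Z ω = z} < 1)
    (hcons1 : ∀ ω, Z ω = z → Y ω = Y1 ω)
    (hcons0 : ∀ ω, Z ω ≠ z → Y ω = Y0 ω)
    (hind1 : ∀ y' ∈ L,
      μ ({ω | Y1 ω = y'} ∩ {ω | Z ω = z}) = μ {ω | Y1 ω = y'} * μ {ω | Z ω = z})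
    (hind0 : ∀ y' ∈ L,
      μ ({ω | Y0 ω = y'} ∩ {ω | Z ω = z}) = μ {ω | Y0 ω = y'} * μ {ω | Z ω = z}) :
    (∫ ω, Y ω ∂(μ[|{ω | Z ω = z}])) - (∫ ω, Y ω ∂(μ[|{ω | Z ω ≠ z}]))
      ≤ ∑ y ∈ L, y * (μ {ω | Y0 ω ≠ y ∧ Y1 ω = y}).toReal := by
  set s := {ω | Z ω = z}
  have hμs : μ s ≠ 0 := hpos.ne'
  have hμsc : μ sᶜ ≠ 0 := by
    rw [prob_compl_eq_one_sub hmZ]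
    exact (tsub_pos_of_lt hlt).ne'
  have := cond_isProbabilityMeasure hμs
  have := cond_isProbabilityMeasure hμsc
  have hlaw1 (y : ℝ) (hy : y ∈ L) : μ[|s] {ω | Y ω = y} = μ {ω | Y1 ω = y} :=
    cond_setOf_eq_of_eqOn hmZ hμs (fun ω hω ↦ hcons1 ω hω) (hind1 y hy)
  have hlaw0 (y : ℝ) (hy : y ∈ L) : μ[|sᶜ] {ω | Y ω = y} = μ {ω | Y0 ω = y} :=
    cond_setOf_eq_of_eqOn hmZ.compl hμsc (fun ω hω ↦ hcons0 ω hω)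
      (measure_inter_compl_eq_mul hmZ (hind0 y hy))
  change ∫ ω, Y ω ∂(μ[|s]) - ∫ ω, Y ω ∂(μ[|sᶜ]) ≤ _
  rw [integral_eq_sum_mul_measureReal_of_mem_finset hYm hYL,
    integral_eq_sum_mul_measureReal_of_mem_finset hYm hYL, ← Finset.sum_sub_distrib]
  refine Finset.sum_le_sum fun y hy ↦ ?_
  rw [← mul_sub]
  refine mul_le_mul_of_nonneg_left ?_ (hL y hy)
  have hdiff : {ω | Y0 ω ≠ y ∧ Y1 ω = y} = {ω | Y1 ω = y} \ {ω | Y0 ω = y} :=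
    Set.ext fun ω ↦ and_comm
  simp only [measureReal_def, hlaw1 y hy, hlaw0 y hy, hdiff]
  exact le_measureReal_sdiff

/-- Under consistency and ignorability, with a nonnegative discrete outcome, the
weighted sum of marginal probabilities of causation dominates the difference of
conditional means:
`Σ_{y ∈ L} y · P(Y₀ ≠ y ∧ Y₁ = y) ≥ E[Y | Z = z] − E[Y | Z ≠ z]`. -/
theorem mpoc_weighted_sum_ge_conditional_mean_difference
    {Ω 𝒵 : Type*} [MeasurableSpace Ω]
    (μ : Measure Ω) [IsProbabilityMeasure μ]
    (L : Finset ℝ) (hL : ∀ x ∈ L, 0 ≤ x)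
    (Z : Ω → 𝒵) (z : 𝒵)
    (Y Y1 Y0 : Ω → ℝ)
    (hYm : Measurable Y) (hY1m : Measurable Y1) (hY0m : Measurable Y0)
    (hYL : ∀ ω, Y ω ∈ L) (hY1L : ∀ ω, Y1 ω ∈ L) (hY0L : ∀ ω, Y0 ω ∈ L)
    (hmZ : MeasurableSet {ω | Z ω = z})
    (hpos : 0 < μ {ω | Z ω = z}) (hlt : μ {ω | Z ω = z} < 1)
    (hcons1 : ∀ ω, Z ω = z → Y ω = Y1 ω)
    (hcons0 : ∀ ω, Z ω ≠ z → Y ω = Y0 ω)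
    (hind1 : ∀ y' ∈ L,
      μ ({ω | Y1 ω = y'} ∩ {ω | Z ω = z}) = μ {ω | Y1 ω = y'} * μ {ω | Z ω = z})
    (hind0 : ∀ y' ∈ L,
      μ ({ω | Y0 ω = y'} ∩ {ω | Z ω = z}) = μ {ω | Y0 ω = y'} * μ {ω | Z ω = z}) :
    (∫ ω, Y ω ∂(μ[|{ω | Z ω = z}])) - (∫ ω, Y ω ∂(μ[|{ω | Z ω ≠ z}]))
      ≤ ∑ y ∈ L, y * (μ {ω | Y0 ω ≠ y ∧ Y1 ω = y}).toReal :=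
  mpoc_weighted_sum_ge_conditional_mean_difference_general μ L hL Z z Y Y1 Y0 hYm hYL hmZ hpos hlt
    hcons1 hcons0 hind1 hind0
end

section
/- Under conditional consistency and conditional ignorability, with a nonnegative discrete outcome, the weighted sum of conditional probabilities of causation dominates the difference of conditional means: Σ_{y ∈ L} y · P(Y₀ ≠ y and Y₁ = y) ≥ E[Y | Z = z, W = w] − E[Y | Z ≠ z, W = w]. -/
/-! By consistency and ignorability, the law of `Y` conditioned on `{Z = z, W = w}` is the
law of `Y₁`, and conditioned on `{Z ≠ z, W = w}` it is the law of `Y₀`. Hence the difference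
of conditional means is `Σ y (P(Y₁ = y) - P(Y₀ = y))`, and each summand is at most
`P(Y₀ ≠ y, Y₁ = y)`, the weights `y` being nonnegative. -/

open MeasureTheory ProbabilityTheory

namespace MeasureTheory

variable {Ω : Type*} [MeasurableSpace Ω]

theorem integral_eq_sum_measureReal_smul_of_mem {E : Type*} [NormedAddCommGroup E]
    [NormedSpace ℝ E] [CompleteSpace E] [MeasurableSpace E] [MeasurableSingletonClass E]
    (ν : Measure Ω) [IsFiniteMeasure ν] (L : Finset E) {f : Ω → E}
    (hf : Measurable f) (hfL : ∀ ω, f ω ∈ L) :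
    ∫ ω, f ω ∂ν = ∑ y ∈ L, ν.real {ω | f ω = y} • y := by
  classical
  have hlevel (y : E) : MeasurableSet {ω | f ω = y} := hf (measurableSet_singleton y)
  have hdecomp (ω : Ω) : f ω = ∑ y ∈ L, {ω' | f ω' = y}.indicator (fun _ ↦ y) ω := by
    simp only [Set.indicator_apply, Set.mem_ofPred_eq, Finset.sum_ite_eq, hfL ω, ↓reduceIte]
  rw [integral_congr_ae (ae_of_all _ hdecomp),
    integral_finsetSum _ fun y _ ↦ (integrable_const y).indicator (hlevel y)]
  exact Finset.sum_congr rfl fun y _ ↦ integral_indicator_const y (hlevel y)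

theorem measureReal_setOf_eq_sub_le {μ : Measure Ω} [IsFiniteMeasure μ] {α : Type*}
    (X₁ X₀ : Ω → α) (y : α) :
    μ.real {ω | X₁ ω = y} - μ.real {ω | X₀ ω = y} ≤ μ.real {ω | X₀ ω ≠ y ∧ X₁ ω = y} := by
  have hsdiff : {ω | X₁ ω = y} \ {ω | X₀ ω = y} = {ω | X₀ ω ≠ y ∧ X₁ ω = y} := by
    ext ω; simp [and_comm]
  exact hsdiff ▸ le_measureReal_sdiff

end MeasureTheory

namespace ProbabilityTheory

variable {Ω : Type*} [MeasurableSpace Ω] {μ : Measure Ω} {s A B : Set Ω}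

theorem cond_apply_eq_of_inter_eq_of_indep (hA : MeasurableSet A) (hs : μ s ≠ 0)
    (hs_fin : μ s ≠ ⊤) (hAB : s ∩ A = B ∩ s) (hind : μ (B ∩ s) = μ B * μ s) :
    μ[A|s] = μ B := by
  rw [cond_apply' hA, hAB, hind, mul_comm, mul_assoc, ENNReal.mul_inv_cancel hs hs_fin, mul_one]

theorem cond_setOf_eq_eq_of_eqOn_of_indep [IsFiniteMeasure μ] {α : Type*} {Y Y' : Ω → α} {y : α}
    (hY : MeasurableSet {ω | Y ω = y}) (hs : μ s ≠ 0) (hYY' : Set.EqOn Y Y' s)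
    (hind : μ ({ω | Y' ω = y} ∩ s) = μ {ω | Y' ω = y} * μ s) :
    μ[{ω | Y ω = y}|s] = μ {ω | Y' ω = y} := by
  refine cond_apply_eq_of_inter_eq_of_indep hY hs (measure_ne_top μ s) ?_ hind
  ext ω
  simp only [Set.mem_inter_iff, Set.mem_ofPred_eq]
  constructor
  · rintro ⟨hω, rfl⟩; exact ⟨(hYY' hω).symm, hω⟩
  · rintro ⟨rfl, hω⟩; exact ⟨hω, hYY' hω⟩

theorem integral_cond_eq_sum_of_eqOn_of_indep [IsFiniteMeasure μ] (L : Finset ℝ)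
    {Y Y' : Ω → ℝ} (hY : Measurable Y) (hYL : ∀ ω, Y ω ∈ L) (hs : μ s ≠ 0)
    (hYY' : Set.EqOn Y Y' s)
    (hind : ∀ y ∈ L, μ ({ω | Y' ω = y} ∩ s) = μ {ω | Y' ω = y} * μ s) :
    ∫ ω, Y ω ∂μ[|s] = ∑ y ∈ L, y * μ.real {ω | Y' ω = y} := by
  rw [integral_eq_sum_measureReal_smul_of_mem _ L hY hYL]
  refine Finset.sum_congr rfl fun y hy ↦ ?_
  rw [smul_eq_mul, mul_comm, measureReal_def, measureReal_def,
    cond_setOf_eq_eq_of_eqOn_of_indep (hY (measurableSet_singleton y)) hs hYY' (hind y hy)]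

end ProbabilityTheory

theorem cpoc_weighted_sum_ge_conditional_mean_difference_general
    {Ω 𝒵 𝒲 : Type*} [MeasurableSpace Ω]
    (μ : Measure Ω) [IsProbabilityMeasure μ]
    (L : Finset ℝ) (hL : ∀ x ∈ L, 0 ≤ x)
    (Z : Ω → 𝒵) (z : 𝒵) (W : Ω → 𝒲) (w : 𝒲)
    (Y Y1 Y0 : Ω → ℝ)
    (hYm : Measurable Y)
    (hYL : ∀ ω, Y ω ∈ L)
    (hpos1 : 0 < μ {ω | Z ω = z ∧ W ω = w})
    (hpos0 : 0 < μ {ω | Z ω ≠ z ∧ W ω = w})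
    (hcons1 : ∀ ω, Z ω = z ∧ W ω = w → Y ω = Y1 ω)
    (hcons0 : ∀ ω, Z ω ≠ z ∧ W ω = w → Y ω = Y0 ω)
    (hind1 : ∀ y' ∈ L,
      μ ({ω | Y1 ω = y'} ∩ {ω | Z ω = z ∧ W ω = w})
        = μ {ω | Y1 ω = y'} * μ {ω | Z ω = z ∧ W ω = w})
    (hind0 : ∀ y' ∈ L,
      μ ({ω | Y0 ω = y'} ∩ {ω | Z ω ≠ z ∧ W ω = w})
        = μ {ω | Y0 ω = y'} * μ {ω | Z ω ≠ z ∧ W ω = w}) :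
    (∫ ω, Y ω ∂(μ[|{ω | Z ω = z ∧ W ω = w}]))
      - (∫ ω, Y ω ∂(μ[|{ω | Z ω ≠ z ∧ W ω = w}]))
      ≤ ∑ y ∈ L, y * (μ {ω | Y0 ω ≠ y ∧ Y1 ω = y}).toReal := by
  rw [integral_cond_eq_sum_of_eqOn_of_indep L hYm hYL hpos1.ne' hcons1 hind1,
    integral_cond_eq_sum_of_eqOn_of_indep L hYm hYL hpos0.ne' hcons0 hind0,
    ← Finset.sum_sub_distrib]
  refine Finset.sum_le_sum fun y hy ↦ ?_
  rw [← mul_sub]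
  exact mul_le_mul_of_nonneg_left (measureReal_setOf_eq_sub_le Y1 Y0 y) (hL y hy)

/-- Under conditional consistency and conditional ignorability, with a nonnegative
discrete outcome, the weighted sum of conditional probabilities of causation dominates
the difference of conditional means:
`Σ_{y ∈ L} y · P(Y₀ ≠ y ∧ Y₁ = y) ≥ E[Y | Z = z, W = w] − E[Y | Z ≠ z, W = w]`. -/
theorem cpoc_weighted_sum_ge_conditional_mean_difference
    {Ω 𝒵 𝒲 : Type*} [MeasurableSpace Ω]
    (μ : Measure Ω) [IsProbabilityMeasure μ]
    (L : Finset ℝ) (hL : ∀ x ∈ L, 0 ≤ x)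
    (Z : Ω → 𝒵) (z : 𝒵) (W : Ω → 𝒲) (w : 𝒲)
    (Y Y1 Y0 : Ω → ℝ)
    (hYm : Measurable Y) (hY1m : Measurable Y1) (hY0m : Measurable Y0)
    (hYL : ∀ ω, Y ω ∈ L) (hY1L : ∀ ω, Y1 ω ∈ L) (hY0L : ∀ ω, Y0 ω ∈ L)
    (hmE1 : MeasurableSet {ω | Z ω = z ∧ W ω = w})
    (hmE0 : MeasurableSet {ω | Z ω ≠ z ∧ W ω = w})
    (hpos1 : 0 < μ {ω | Z ω = z ∧ W ω = w})
    (hpos0 : 0 < μ {ω | Z ω ≠ z ∧ W ω = w})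
    (hcons1 : ∀ ω, Z ω = z ∧ W ω = w → Y ω = Y1 ω)
    (hcons0 : ∀ ω, Z ω ≠ z ∧ W ω = w → Y ω = Y0 ω)
    (hind1 : ∀ y' ∈ L,
      μ ({ω | Y1 ω = y'} ∩ {ω | Z ω = z ∧ W ω = w})
        = μ {ω | Y1 ω = y'} * μ {ω | Z ω = z ∧ W ω = w})
    (hind0 : ∀ y' ∈ L,
      μ ({ω | Y0 ω = y'} ∩ {ω | Z ω ≠ z ∧ W ω = w})
        = μ {ω | Y0 ω = y'} * μ {ω | Z ω ≠ z ∧ W ω = w}) :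
    (∫ ω, Y ω ∂(μ[|{ω | Z ω = z ∧ W ω = w}]))
      - (∫ ω, Y ω ∂(μ[|{ω | Z ω ≠ z ∧ W ω = w}]))
      ≤ ∑ y ∈ L, y * (μ {ω | Y0 ω ≠ y ∧ Y1 ω = y}).toReal :=
  cpoc_weighted_sum_ge_conditional_mean_difference_general μ L hL Z z W w Y Y1 Y0 hYm hYL hpos1
    hpos0 hcons1 hcons0 hind1 hind0
end

section
/- For a binary treatment under consistency and ignorability, with a nonnegative discrete outcome, both the weighted sum of marginal probabilities of causation and the absolute natural total effect dominate the difference of conditional means: min{ Σ_{y ∈ L} y · P(Y₀ ≠ y and Y₁ = y), |E[Y₁] − E[Y₀]| } ≥ E[Y | Z = z] − E[Y | Z ≠ z], for each z ∈ {0, 1}, where Y₁ and Y₀ are the potential outcomes corresponding to Z = z and Z ≠ z respectively. -/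
/-!
By ignorability each level set `{Y₁ = y}` is independent of `{Z = z}`, and independence passes
to the complement `{Z ≠ z}`, so conditioning on either event does not change the laws of `Y₁`
and `Y₀`. With consistency the two conditional means are therefore `E[Y₁]` and `E[Y₀]`. Their
difference is `∑ y (P(Y₁ = y) - P(Y₀ = y)) ≤ ∑ y P(Y₀ ≠ y, Y₁ = y)`, termwise since `y ≥ 0`.
-/

open MeasureTheory ProbabilityTheory

section

variable {Ω : Type*} [MeasurableSpace Ω] {μ : Measure Ω} {L : Finset ℝ} {W : Ω → ℝ}

theorem integral_eq_sum_mul_measureReal_preimage [IsFiniteMeasure μ] (hW : Measurable W)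
    (hWL : ∀ ω, W ω ∈ L) : ∫ ω, W ω ∂μ = ∑ y ∈ L, y * μ.real (W ⁻¹' {y}) := by
  have hW_eq : W = fun ω ↦ ∑ y ∈ L, (W ⁻¹' {y}).indicator (fun _ ↦ y) ω := by
    ext ω
    rw [Finset.sum_eq_single_of_mem (W ω) (hWL ω)]
    · simp
    · exact fun y _ hy ↦ Set.indicator_of_notMem (s := W ⁻¹' {y}) (fun h ↦ hy h.symm) _
  conv_lhs => rw [hW_eq]
  rw [integral_finsetSum _ fun y _ ↦
    (integrable_const y).indicator (hW (measurableSet_singleton y))]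
  simp only [integral_indicator_const _ (hW (measurableSet_singleton _)), smul_eq_mul, mul_comm]

open MeasurableSpace in
theorem ProbabilityTheory.IndepSet.compl_right {s t : Set Ω} (h : IndepSet s t μ) :
    IndepSet s tᶜ μ :=
  ((IndepSet_iff_Indep s t μ).1 h).indepSet_of_measurableSet
    (measurableSet_generateFrom (Set.mem_singleton s))
    (measurableSet_generateFrom (Set.mem_singleton t)).compl

theorem ProbabilityTheory.IndepSet.cond_apply [IsFiniteMeasure μ] {s t : Set Ω}
    (h : IndepSet t s μ) (hs : MeasurableSet s) (hμs : μ s ≠ 0) : μ[t | s] = μ t := by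
  rw [ProbabilityTheory.cond_apply hs, Set.inter_comm, h.measure_inter_eq_mul, mul_comm,
    mul_assoc, ENNReal.mul_inv_cancel hμs (measure_ne_top μ s), mul_one]

theorem integral_cond_eq_integral_of_indepSet [IsFiniteMeasure μ] {s : Set Ω} {V : Ω → ℝ}
    (hW : Measurable W) (hWL : ∀ ω, W ω ∈ L) (hs : MeasurableSet s) (hμs : μ s ≠ 0)
    (hindep : ∀ y ∈ L, IndepSet (W ⁻¹' {y}) s μ) (hVW : ∀ ω ∈ s, V ω = W ω) :
    ∫ ω, V ω ∂μ[|s] = ∫ ω, W ω ∂μ := by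
  have hVW_ae : V =ᵐ[μ[|s]] W := (ae_cond_mem hs).mono hVW
  rw [integral_congr_ae hVW_ae, integral_eq_sum_mul_measureReal_preimage hW hWL,
    integral_eq_sum_mul_measureReal_preimage hW hWL]
  refine Finset.sum_congr rfl fun y hy ↦ ?_
  rw [measureReal_def, measureReal_def, (hindep y hy).cond_apply hs hμs]

theorem integral_sub_integral_le_sum_mul_measureReal [IsFiniteMeasure μ] {X X' : Ω → ℝ}
    (hL : ∀ y ∈ L, 0 ≤ y) (hX : Measurable X) (hX' : Measurable X')
    (hXL : ∀ ω, X ω ∈ L) (hX'L : ∀ ω, X' ω ∈ L) :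
    ∫ ω, X ω ∂μ - ∫ ω, X' ω ∂μ ≤ ∑ y ∈ L, y * μ.real {ω | X' ω ≠ y ∧ X ω = y} := by
  rw [integral_eq_sum_mul_measureReal_preimage hX hXL,
    integral_eq_sum_mul_measureReal_preimage hX' hX'L, ← Finset.sum_sub_distrib]
  refine Finset.sum_le_sum fun y hy ↦ ?_
  rw [← mul_sub]
  refine mul_le_mul_of_nonneg_left ?_ (hL y hy)
  have hset : X ⁻¹' {y} \ X' ⁻¹' {y} = {ω | X' ω ≠ y ∧ X ω = y} := by
    ext ω; simp [and_comm]
  exact hset ▸ le_measureReal_sdiff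

end

theorem binary_mpoc_and_total_effect_ge_conditional_mean_difference_general
    {Ω : Type*} [MeasurableSpace Ω]
    (μ : Measure Ω) [IsProbabilityMeasure μ]
    (L : Finset ℝ) (hL : ∀ x ∈ L, 0 ≤ x)
    (Z : Ω → Fin 2) (z : Fin 2)
    (Y Y1 Y0 : Ω → ℝ)
    (hY1m : Measurable Y1) (hY0m : Measurable Y0)
    (hY1L : ∀ ω, Y1 ω ∈ L) (hY0L : ∀ ω, Y0 ω ∈ L)
    (hmZ : MeasurableSet {ω | Z ω = z})
    (hpos : 0 < μ {ω | Z ω = z}) (hlt : μ {ω | Z ω = z} < 1)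
    (hcons1 : ∀ ω, Z ω = z → Y ω = Y1 ω)
    (hcons0 : ∀ ω, Z ω ≠ z → Y ω = Y0 ω)
    (hind1 : ∀ y' ∈ L,
      μ ({ω | Y1 ω = y'} ∩ {ω | Z ω = z}) = μ {ω | Y1 ω = y'} * μ {ω | Z ω = z})
    (hind0 : ∀ y' ∈ L,
      μ ({ω | Y0 ω = y'} ∩ {ω | Z ω = z}) = μ {ω | Y0 ω = y'} * μ {ω | Z ω = z}) :
    (∫ ω, Y ω ∂(μ[|{ω | Z ω = z}])) - (∫ ω, Y ω ∂(μ[|{ω | Z ω ≠ z}]))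
      ≤ min (∑ y ∈ L, y * (μ {ω | Y0 ω ≠ y ∧ Y1 ω = y}).toReal)
          |(∫ ω, Y1 ω ∂μ) - (∫ ω, Y0 ω ∂μ)| := by
  set A : Set Ω := {ω | Z ω = z}
  have hindep : ∀ {X : Ω → ℝ}, Measurable X →
      (∀ y ∈ L, μ ({ω | X ω = y} ∩ A) = μ {ω | X ω = y} * μ A) →
      ∀ y ∈ L, IndepSet (X ⁻¹' {y}) A μ := fun hX hind y hy ↦
    (indepSet_iff_measure_inter_eq_mul (hX (measurableSet_singleton y)) hmZ μ).2 (hind y hy)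
  have hμAc : μ Aᶜ ≠ 0 := by
    rw [prob_compl_eq_one_sub hmZ]
    exact (tsub_pos_of_lt hlt).ne'
  have hE1 : ∫ ω, Y ω ∂μ[|A] = ∫ ω, Y1 ω ∂μ :=
    integral_cond_eq_integral_of_indepSet hY1m hY1L hmZ hpos.ne' (hindep hY1m hind1) hcons1
  have hE0 : ∫ ω, Y ω ∂μ[|Aᶜ] = ∫ ω, Y0 ω ∂μ :=
    integral_cond_eq_integral_of_indepSet hY0m hY0L hmZ.compl hμAc
      (fun y hy ↦ (hindep hY0m hind0 y hy).compl_right) hcons0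
  rw [show {ω | Z ω ≠ z} = Aᶜ from rfl, hE1, hE0]
  exact le_min (integral_sub_integral_le_sum_mul_measureReal hL hY1m hY0m hY1L hY0L)
    (le_abs_self _)

/-- For a binary treatment under consistency and ignorability, with a nonnegative
discrete outcome, both the weighted sum of marginal probabilities of causation and the
absolute natural total effect dominate the difference of conditional means:
`min{ Σ_{y ∈ L} y · P(Y₀ ≠ y ∧ Y₁ = y), |E[Y₁] − E[Y₀]| } ≥ E[Y | Z = z] − E[Y | Z ≠ z]`. -/
theorem binary_mpoc_and_total_effect_ge_conditional_mean_difference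
    {Ω : Type*} [MeasurableSpace Ω]
    (μ : Measure Ω) [IsProbabilityMeasure μ]
    (L : Finset ℝ) (hL : ∀ x ∈ L, 0 ≤ x)
    (Z : Ω → Fin 2) (z : Fin 2)
    (Y Y1 Y0 : Ω → ℝ)
    (hYm : Measurable Y) (hY1m : Measurable Y1) (hY0m : Measurable Y0)
    (hYL : ∀ ω, Y ω ∈ L) (hY1L : ∀ ω, Y1 ω ∈ L) (hY0L : ∀ ω, Y0 ω ∈ L)
    (hmZ : MeasurableSet {ω | Z ω = z})
    (hpos : 0 < μ {ω | Z ω = z}) (hlt : μ {ω | Z ω = z} < 1)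
    (hcons1 : ∀ ω, Z ω = z → Y ω = Y1 ω)
    (hcons0 : ∀ ω, Z ω ≠ z → Y ω = Y0 ω)
    (hind1 : ∀ y' ∈ L,
      μ ({ω | Y1 ω = y'} ∩ {ω | Z ω = z}) = μ {ω | Y1 ω = y'} * μ {ω | Z ω = z})
    (hind0 : ∀ y' ∈ L,
      μ ({ω | Y0 ω = y'} ∩ {ω | Z ω = z}) = μ {ω | Y0 ω = y'} * μ {ω | Z ω = z}) :
    (∫ ω, Y ω ∂(μ[|{ω | Z ω = z}])) - (∫ ω, Y ω ∂(μ[|{ω | Z ω ≠ z}]))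
      ≤ min (∑ y ∈ L, y * (μ {ω | Y0 ω ≠ y ∧ Y1 ω = y}).toReal)
          |(∫ ω, Y1 ω ∂μ) - (∫ ω, Y0 ω ∂μ)| :=
  binary_mpoc_and_total_effect_ge_conditional_mean_difference_general μ L hL Z z Y Y1 Y0 hY1m hY0m
    hY1L hY0L hmZ hpos hlt hcons1 hcons0 hind1 hind0
end

section
/- Under consistency alone, the probability of necessity and sufficiency decomposes as PNS = P(Z = z, Y = y) · PN + P(Z ≠ z, Y ≠ y) · PS, i.e., P(Y₀ ≠ y and Y₁ = y) = P(Z = z and Y = y) · P(Y₀ ≠ y | Z = z, Y = y) + P(Z ≠ z and Y ≠ y) · P(Y₁ = y | Z ≠ z, Y ≠ y). -/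
open MeasureTheory ProbabilityTheory

/-- Under consistency alone, the probability of necessity and sufficiency decomposes as
`PNS = P(Z = z, Y = y) · PN + P(Z ≠ z, Y ≠ y) · PS`, i.e.,
`P(Y₀ ≠ y ∧ Y₁ = y) = P(Z = z ∧ Y = y) · P(Y₀ ≠ y | Z = z, Y = y)
  + P(Z ≠ z ∧ Y ≠ y) · P(Y₁ = y | Z ≠ z, Y ≠ y)`. -/
theorem pns_decomposition
    {Ω 𝒵 𝒴 : Type*} [MeasurableSpace Ω]
    (μ : Measure Ω) [IsProbabilityMeasure μ]
    (Z : Ω → 𝒵) (z : 𝒵) (Y Y1 Y0 : Ω → 𝒴) (y : 𝒴)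
    (hmZ : MeasurableSet {ω | Z ω = z})
    (hmY : ∀ y' : 𝒴, MeasurableSet {ω | Y ω = y'})
    (hmY1 : ∀ y' : 𝒴, MeasurableSet {ω | Y1 ω = y'})
    (hmY0 : ∀ y' : 𝒴, MeasurableSet {ω | Y0 ω = y'})
    (hpos1 : 0 < μ {ω | Z ω = z ∧ Y ω = y})
    (hpos0 : 0 < μ {ω | Z ω ≠ z ∧ Y ω ≠ y})
    (hcons1 : ∀ ω, Z ω = z → Y ω = Y1 ω)
    (hcons0 : ∀ ω, Z ω ≠ z → Y ω = Y0 ω) :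
    μ {ω | Y0 ω ≠ y ∧ Y1 ω = y}
      = μ {ω | Z ω = z ∧ Y ω = y}
          * μ[{ω | Y0 ω ≠ y}|{ω | Z ω = z ∧ Y ω = y}]
        + μ {ω | Z ω ≠ z ∧ Y ω ≠ y}
          * μ[{ω | Y1 ω = y}|{ω | Z ω ≠ z ∧ Y ω ≠ y}] := by
  set B1 : Set Ω := {ω | Z ω = z ∧ Y ω = y} with hB1
  set B0 : Set Ω := {ω | Z ω ≠ z ∧ Y ω ≠ y} with hB0
  have hmB1 : MeasurableSet B1 := hmZ.inter (hmY y)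
  have hmB0 : MeasurableSet B0 := hmZ.compl.inter (hmY y).compl
  have hc1 : μ B1 * μ[{ω | Y0 ω ≠ y}|B1] = μ (B1 ∩ {ω | Y0 ω ≠ y}) := by
    rw [cond_apply hmB1, ← mul_assoc, ENNReal.mul_inv_cancel hpos1.ne' (measure_ne_top μ B1),
      one_mul]
  have hc0 : μ B0 * μ[{ω | Y1 ω = y}|B0] = μ (B0 ∩ {ω | Y1 ω = y}) := by
    rw [cond_apply hmB0, ← mul_assoc, ENNReal.mul_inv_cancel hpos0.ne' (measure_ne_top μ B0),
      one_mul]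
  rw [hc1, hc0]
  have hset : {ω | Y0 ω ≠ y ∧ Y1 ω = y}
      = (B1 ∩ {ω | Y0 ω ≠ y}) ∪ (B0 ∩ {ω | Y1 ω = y}) := by
    ext ω
    simp only [hB1, hB0, Set.mem_setOf_eq, Set.mem_union, Set.mem_inter_iff]
    constructor
    · rintro ⟨h0, h1⟩
      by_cases hz : Z ω = z
      · exact Or.inl ⟨⟨hz, (hcons1 ω hz).trans h1⟩, h0⟩
      · exact Or.inr ⟨⟨hz, fun hy => h0 ((hcons0 ω hz).symm.trans hy)⟩, h1⟩
    · rintro (⟨⟨hz, hy⟩, h0⟩ | ⟨⟨hz, hy⟩, h1⟩)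
      · exact ⟨h0, (hcons1 ω hz).symm.trans hy⟩
      · exact ⟨fun h => hy ((hcons0 ω hz).trans h), h1⟩
  have hdisj : Disjoint (B1 ∩ {ω | Y0 ω ≠ y}) (B0 ∩ {ω | Y1 ω = y}) := by
    apply Set.disjoint_left.mpr
    rintro ω ⟨⟨hz, _⟩, _⟩ ⟨⟨hz', _⟩, _⟩
    exact hz' hz
  rw [hset, measure_union hdisj (hmB0.inter (hmY1 y))]
end
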